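/- arXiv:2501.04010 — 9 statements merged into one kernel-verified Lean document; each statement's English description precedes it below -/
import Mathlib

section
/- The commutator PQ - QP of two orthogonal projections commutes with the positive operators T = √((P-Q)²) and C = √((P+Q-I)²). -/
/-!
`D = PQ - QP` is skew-adjoint and commutes with `(P - Q)²`, hence also with
`(P + Q - 1)² = 1 - (P - Q)²`. If `D` is skew-adjoint and commutes with `T²`, `T ≥ 0`, then the
self-adjoint `U = DT - TD` anticommutes with `T`, so `TU² = -UTU` is both `≥ 0` (a product of
commuting positive operators) and `≤ 0`. Hence `TU = 0 = UT`, so `U³ = 0`, and `U = 0` by the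
C⋆-identity.

Positivity of a product of commuting positive operators is proved without square roots, by
Riesz's iteration `Xₙ₊₁ = Xₙ - Xₙ²`: for `0 ≤ T ≤ 1` it telescopes to
`T = X₀² + ⋯ + Xₙ² + Xₙ₊₁` with `Xₙ → 0` strongly.
-/

open Filter Topology
open scoped RealInnerProductSpace

theorem IsIdempotentElem.commute_sub_mul_sub {R : Type*} [Ring R] {p q : R}
    (hp : IsIdempotentElem p) (hq : IsIdempotentElem q) : Commute p ((p - q) * (p - q)) := by
  have hp' : ∀ x, p * (p * x) = p * x := fun x ↦ by rw [← mul_assoc, hp.eq]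
  simp only [Commute, SemiconjBy, mul_sub, sub_mul, mul_assoc, hp.eq, hq.eq, hp']
  abel

theorem IsIdempotentElem.add_sub_one_mul_self {R : Type*} [Ring R] {p q : R}
    (hp : IsIdempotentElem p) (hq : IsIdempotentElem q) :
    (p + q - 1) * (p + q - 1) = 1 - (p - q) * (p - q) := by
  simp only [mul_sub, sub_mul, mul_add, add_mul, mul_one, one_mul, hp.eq, hq.eq]
  abel

def rieszSeq {R : Type*} [Ring R] (t : R) : ℕ → R
  | 0 => t
  | n + 1 => rieszSeq t n - rieszSeq t n * rieszSeq t n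

theorem Commute.rieszSeq_left {R : Type*} [Ring R] {s t : R} (h : Commute t s) (n : ℕ) :
    Commute (rieszSeq t n) s := by
  induction n with
  | zero => exact h
  | succ n ih => exact ih.sub_left (ih.mul_left ih)

theorem IsSelfAdjoint.rieszSeq {R : Type*} [Ring R] [StarRing R] {t : R} (h : IsSelfAdjoint t)
    (n : ℕ) : IsSelfAdjoint (rieszSeq t n) := by
  induction n with
  | zero => exact h
  | succ n ih => exact ih.sub (by simpa [sq] using ih.pow 2)

namespace ContinuousLinearMap

variable {V : Type*} [NormedAddCommGroup V] [InnerProductSpace ℝ V] [CompleteSpace V]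
  {S T : V →L[ℝ] V}

theorem IsPositive.conj_of_isSelfAdjoint {A B : V →L[ℝ] V} (hA : A.IsPositive)
    (hB : IsSelfAdjoint B) : (B * A * B).IsPositive := by
  have h := hA.conj_adjoint B
  rw [hB.adjoint_eq] at h
  exact h

theorem rieszSeq_isPositive (hT : T.IsPositive) (hT1 : (1 - T).IsPositive) (n : ℕ) :
    (rieszSeq T n).IsPositive ∧ (1 - rieszSeq T n).IsPositive := by
  induction n with
  | zero => exact ⟨hT, hT1⟩
  | succ n ih =>
    obtain ⟨hX, hX1⟩ := ih
    set X := rieszSeq T n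
    have hsum : rieszSeq T (n + 1) = X * (1 - X) * X + (1 - X) * X * (1 - X) := by
      simp only [rieszSeq, X]; noncomm_ring
    have hsum1 : 1 - rieszSeq T (n + 1) = (1 - X) + X * X := by
      simp only [rieszSeq, X]; noncomm_ring
    rw [hsum1, hsum]
    exact ⟨(hX1.conj_of_isSelfAdjoint hX.isSelfAdjoint).add
      (hX.conj_of_isSelfAdjoint hX1.isSelfAdjoint),
      hX1.add (by simpa using isPositive_one.conj_of_isSelfAdjoint hX.isSelfAdjoint)⟩

theorem sum_range_norm_rieszSeq_apply_sq (hT : IsSelfAdjoint T) (x : V) (n : ℕ) :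
    ∑ k ∈ Finset.range n, ‖rieszSeq T k x‖ ^ 2 = ⟪T x, x⟫ - ⟪rieszSeq T n x, x⟫ := by
  induction n with
  | zero => simp [rieszSeq]
  | succ n ih =>
    have hX : IsSelfAdjoint (rieszSeq T n) := hT.rieszSeq n
    have hsymm : ⟪rieszSeq T n (rieszSeq T n x), x⟫ = ‖rieszSeq T n x‖ ^ 2 := by
      rw [hX.isSymmetric.apply_clm, real_inner_self_eq_norm_sq]
    rw [Finset.sum_range_succ, ih, rieszSeq, sub_apply, inner_sub_left, mul_apply_eq_comp, hsymm]
    ring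

theorem tendsto_rieszSeq_apply (hT : T.IsPositive) (hT1 : (1 - T).IsPositive) (x : V) :
    Tendsto (fun n ↦ rieszSeq T n x) atTop (𝓝 0) := by
  have hsum : Summable fun k ↦ ‖rieszSeq T k x‖ ^ 2 :=
    summable_of_sum_range_le (fun _ ↦ by positivity) fun n ↦ by
      rw [sum_range_norm_rieszSeq_apply_sq hT.isSelfAdjoint x n]
      linarith [((rieszSeq_isPositive hT hT1 n).1).inner_nonneg_left x]
  rw [tendsto_zero_iff_norm_tendsto_zero]
  simpa [Real.sqrt_sq (norm_nonneg _)] using hsum.tendsto_atTop_zero.sqrt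

theorem mul_rieszSeq_le (hS : S.IsPositive) (hT : IsSelfAdjoint T) (h : Commute T S) (n : ℕ) :
    S * rieszSeq T n ≤ S * T := by
  refine antitone_nat_of_succ_le (f := fun n ↦ S * rieszSeq T n) (fun n ↦ ?_) (Nat.zero_le n)
  set X := rieszSeq T n
  have hX : IsSelfAdjoint X := hT.rieszSeq n
  have hXS : Commute X S := h.rieszSeq_left n
  rw [le_def]
  convert hS.conj_of_isSelfAdjoint hX using 1
  simp only [rieszSeq, X, mul_sub, sub_sub_cancel, ← mul_assoc, hXS.eq]

theorem IsPositive.mul_of_commute_of_le_one (hS : S.IsPositive) (hT : T.IsPositive)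
    (hT1 : (1 - T).IsPositive) (h : Commute S T) : (S * T).IsPositive := by
  refine (isPositive_iff' _).2 ⟨?_, fun x ↦ ?_⟩
  · exact (hS.isSelfAdjoint.commute_iff hT.isSelfAdjoint).1 h
  · have hlim : Tendsto (fun n ↦ ⟪S (rieszSeq T n x), x⟫) atTop (𝓝 0) := by
      simpa [hS.inner_left_eq_inner_right] using
        (tendsto_rieszSeq_apply hT hT1 x).inner (tendsto_const_nhds (x := S x))
    refine le_of_tendsto' hlim fun n ↦ ?_
    simpa [inner_sub_left] using
      (mul_rieszSeq_le hS hT.isSelfAdjoint h.symm n).inner_nonneg_left x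

theorem _root_.IsSelfAdjoint.isPositive_one_sub_smul (hT : IsSelfAdjoint T) {c : ℝ} (hc : 0 ≤ c)
    (hcT : c * ‖T‖ ≤ 1) : (1 - c • T).IsPositive := by
  refine (isPositive_iff' _).2
    ⟨(IsSelfAdjoint.one _).sub ((IsSelfAdjoint.all c).smul hT), fun x ↦ ?_⟩
  have hTx : ⟪T x, x⟫ ≤ ‖T‖ * ‖x‖ ^ 2 := calc
    ⟪T x, x⟫ ≤ ‖T x‖ * ‖x‖ := real_inner_le_norm _ _
    _ ≤ ‖T‖ * ‖x‖ * ‖x‖ := by gcongr; exact le_opNorm T x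
    _ = ‖T‖ * ‖x‖ ^ 2 := by ring
  simp only [sub_apply, one_apply_eq_self, smul_apply, inner_sub_left, inner_smul_left,
    real_inner_self_eq_norm_sq, RCLike.conj_to_real]
  nlinarith [mul_le_mul_of_nonneg_left hTx hc, sq_nonneg ‖x‖]

theorem IsPositive.mul_of_commute (hS : S.IsPositive) (hT : T.IsPositive) (h : Commute S T) :
    (S * T).IsPositive := by
  set c := (‖T‖ + 1)⁻¹
  have hc : 0 < c := by positivity
  have hcST : (S * (c • T)).IsPositive :=
    hS.mul_of_commute_of_le_one (hT.smul_of_nonneg hc.le)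
      (hT.isSelfAdjoint.isPositive_one_sub_smul hc.le
        (by rw [inv_mul_le_iff₀ (by positivity)]; linarith))
      (h.smul_right c)
  rw [mul_smul_comm] at hcST
  simpa [hc.ne'] using hcST.smul_of_nonneg (inv_nonneg.2 hc.le)

theorem IsPositive.commute_of_commute_mul_self {D : V →L[ℝ] V} (hT : T.IsPositive)
    (hD : star D = -D) (h : Commute D (T * T)) : Commute D T := by
  set U := D * T - T * D
  have hTsa := hT.isSelfAdjoint.star_eq
  have hU : IsSelfAdjoint U := by
    simp only [U, IsSelfAdjoint, star_sub, star_mul, hTsa, hD]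
    noncomm_ring
  have hanti : T * U = -(U * T) := by
    have := h.eq
    simp only [U]
    linear_combination (norm := noncomm_ring) this
  have hcomm : Commute T (U * U) := by
    rw [Commute, SemiconjBy, ← mul_assoc, hanti, neg_mul, mul_assoc, hanti, mul_neg, neg_neg,
      mul_assoc]
  have hTUU : T * (U * U) = 0 := by
    refine le_antisymm ((le_def _ _).2 ?_) ((nonneg_iff_isPositive _).2 ?_)
    · rw [zero_sub, ← mul_assoc, hanti, neg_mul, neg_neg, mul_assoc, ← mul_assoc]
      exact hT.conj_of_isSelfAdjoint hU
    · exact hT.mul_of_commute (by simpa using isPositive_one.conj_of_isSelfAdjoint hU) hcomm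
  have hTU : T * U = 0 := by
    rw [← CStarRing.mul_star_self_eq_zero_iff, star_mul, hU.star_eq, hTsa, ← mul_assoc,
      mul_assoc T, hTUU, zero_mul]
  have hUT : U * T = 0 := by rw [← neg_eq_zero, ← hanti, hTU]
  have hU3 : U * U * U = 0 := by
    calc U * U * U = U * D * (T * U) - U * T * D * U := by simp only [U]; noncomm_ring
      _ = 0 := by rw [hTU, hUT]; simp
  have hU2 : U * U = 0 := by
    rw [← CStarRing.star_mul_self_eq_zero_iff, star_mul, hU.star_eq, ← mul_assoc, hU3, zero_mul]
  have hU0 : U = 0 := by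
    rwa [← CStarRing.star_mul_self_eq_zero_iff, hU.star_eq]
  exact sub_eq_zero.1 hU0

end ContinuousLinearMap

theorem stmt_5 {V : Type*} [NormedAddCommGroup V] [InnerProductSpace ℝ V] [CompleteSpace V]
    (P Q T C : V →L[ℝ] V) (hP : P * P = P) (hPsa : IsSelfAdjoint P)
    (hQ : Q * Q = Q) (hQsa : IsSelfAdjoint Q)
    (hT : T.IsPositive) (hT2 : T * T = (P - Q) * (P - Q))
    (hC : C.IsPositive) (hC2 : C * C = (P + Q - 1) * (P + Q - 1)) :
    (P * Q - Q * P) * T = T * (P * Q - Q * P) ∧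
    (P * Q - Q * P) * C = C * (P * Q - Q * P) := by
  set D := P * Q - Q * P
  have hD : star D = -D := by
    simp only [D, star_sub, star_mul, hPsa.star_eq, hQsa.star_eq, neg_sub]
  have hPD : Commute P ((P - Q) * (P - Q)) := IsIdempotentElem.commute_sub_mul_sub hP hQ
  have hQD : Commute Q ((P - Q) * (P - Q)) := by
    rw [← neg_sub Q P, neg_mul_neg]
    exact IsIdempotentElem.commute_sub_mul_sub hQ hP
  have hD2 : Commute D ((P - Q) * (P - Q)) := (hPD.mul_left hQD).sub_left (hQD.mul_left hPD)
  refine ⟨(hT.commute_of_commute_mul_self hD (hT2 ▸ hD2)).eq,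
    (hC.commute_of_commute_mul_self hD ?_).eq⟩
  rw [hC2, IsIdempotentElem.add_sub_one_mul_self hP hQ]
  exact (Commute.one_right D).sub_right hD2
end

section
/- Let K, L be closed subspaces of a real Hilbert space with K + L = V and K ∩ L = {0}, and let P, Q be the orthogonal projections onto K and L. Then the operator P - Q is injective. -/
/-! If `P x = Q x`, this common vector lies in `K ⊓ L = ⊥`; since `P` and `Q` are self-adjoint
and fix `K` and `L` pointwise, `P x = 0` and `Q x = 0` force `x ∈ Kᗮ ⊓ Lᗮ = (K ⊔ L)ᗮ = ⊥`. -/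

theorem IsSelfAdjoint.mem_orthogonal_of_apply_eq_zero {𝕜 E : Type*} [RCLike 𝕜]
    [NormedAddCommGroup E] [InnerProductSpace 𝕜 E] [CompleteSpace E] {T : E →L[𝕜] E}
    (hT : IsSelfAdjoint T) {K : Submodule 𝕜 E} (hfix : ∀ k ∈ K, T k = k) {x : E}
    (hx : T x = 0) : x ∈ Kᗮ :=
  (Submodule.mem_orthogonal K x).2 fun k hk => by
    rw [← hfix k hk]
    simpa [hx] using hT.isSymmetric k x

theorem stmt_8_general {V : Type*} [NormedAddCommGroup V] [InnerProductSpace ℝ V] [CompleteSpace V]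
    (K L : Submodule ℝ V)
    (hsup : K ⊔ L = ⊤) (hinf : K ⊓ L = ⊥)
    (P Q : V →L[ℝ] V) (hPsa : IsSelfAdjoint P) (hQsa : IsSelfAdjoint Q)
    (hPK : ∀ x, P x ∈ K) (hPfix : ∀ x ∈ K, P x = x)
    (hQL : ∀ x, Q x ∈ L) (hQfix : ∀ x ∈ L, Q x = x) :
    Function.Injective (P - Q) := by
  refine (injective_iff_map_eq_zero (P - Q)).2 fun x hx => ?_
  have hPQ : P x = Q x := sub_eq_zero.1 hx
  have hPx : P x = 0 := by
    have hmem : P x ∈ K ⊓ L := ⟨hPK x, hPQ ▸ hQL x⟩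
    rwa [hinf, Submodule.mem_bot] at hmem
  have hxK : x ∈ Kᗮ := hPsa.mem_orthogonal_of_apply_eq_zero hPfix hPx
  have hxL : x ∈ Lᗮ := hQsa.mem_orthogonal_of_apply_eq_zero hQfix (hPQ ▸ hPx)
  have hx_perp : x ∈ (K ⊔ L)ᗮ := Submodule.inf_orthogonal K L ▸ ⟨hxK, hxL⟩
  rwa [hsup, Submodule.top_orthogonal_eq_bot, Submodule.mem_bot] at hx_perp

theorem stmt_8 {V : Type*} [NormedAddCommGroup V] [InnerProductSpace ℝ V] [CompleteSpace V]
    (K L : Submodule ℝ V) (hKc : IsClosed (K : Set V)) (hLc : IsClosed (L : Set V))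
    (hsup : K ⊔ L = ⊤) (hinf : K ⊓ L = ⊥)
    (P Q : V →L[ℝ] V) (hPsa : IsSelfAdjoint P) (hQsa : IsSelfAdjoint Q)
    (hPK : ∀ x, P x ∈ K) (hPfix : ∀ x ∈ K, P x = x)
    (hQL : ∀ x, Q x ∈ L) (hQfix : ∀ x ∈ L, Q x = x) :
    Function.Injective (P - Q) :=
  stmt_8_general K L hsup hinf P Q hPsa hQsa hPK hPfix hQL hQfix
end

section
/- Under the assumptions K + L = V, K ∩ L = {0}, the operators P+Q and 2I-(P+Q) are strictly positive (positive and injective), where P, Q are the orthogonal projections onto K, L. -/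
/-!
P, Q, 1 - P and 1 - Q are orthogonal projections, hence positive, and for orthogonal projections
p, q one has re ⟪(p + q) x, x⟫ = ‖p x‖² + ‖q x‖², so ker (p + q) = ker p ∩ ker q. Hence
ker (P + Q) = Kᗮ ∩ Lᗮ = (K + L)ᗮ = 0 and ker (2 - (P + Q)) = ker (1 - P) ∩ ker (1 - Q) = K ∩ L = 0.
-/

open ContinuousLinearMap
open scoped InnerProductSpace

namespace ContinuousLinearMap

variable {𝕜 E : Type*} [RCLike 𝕜] [NormedAddCommGroup E] [InnerProductSpace 𝕜 E]
  {K : Submodule 𝕜 E} {p q : E →L[𝕜] E}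

theorem ker_one_sub_eq_of_mem_of_apply_eq_self (hpK : ∀ x, p x ∈ K) (hfix : ∀ x ∈ K, p x = x) :
    (1 - p).ker = K := by
  ext x
  simp only [LinearMap.mem_ker, coe_coe, sub_apply, one_apply_eq_self, sub_eq_zero]
  exact ⟨fun h => h ▸ hpK x, fun h => (hfix x h).symm⟩

variable [CompleteSpace E]

theorem isStarProjection_of_mem_of_apply_eq_self (hp : IsSelfAdjoint p) (hpK : ∀ x, p x ∈ K)
    (hfix : ∀ x ∈ K, p x = x) : IsStarProjection p :=
  ⟨ext fun x => hfix _ (hpK x), hp⟩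

theorem IsStarProjection.re_inner_apply_self (hp : IsStarProjection p) (x : E) :
    RCLike.re ⟪p x, x⟫_𝕜 = ‖p x‖ ^ 2 := by
  have h : ⟪p x, x⟫_𝕜 = ⟪p x, p x⟫_𝕜 :=
    calc ⟪p x, x⟫_𝕜 = ⟪p (p x), x⟫_𝕜 := by rw [← mul_apply_eq_comp, hp.isIdempotentElem.eq]
      _ = ⟪p x, p x⟫_𝕜 := hp.isSelfAdjoint.isSymmetric _ _
  rw [h, inner_self_eq_norm_sq]

theorem IsStarProjection.ker_add (hp : IsStarProjection p) (hq : IsStarProjection q) :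
    (p + q).ker = p.ker ⊓ q.ker := by
  refine le_antisymm (fun x hx => ?_) fun x ⟨hpx, hqx⟩ => by simp_all
  have hsum : ‖p x‖ ^ 2 + ‖q x‖ ^ 2 = 0 := by
    rw [← hp.re_inner_apply_self, ← hq.re_inner_apply_self, ← map_add, ← inner_add_left,
      ← add_apply, show (p + q) x = 0 from hx, inner_zero_left, map_zero]
  obtain ⟨hpx, hqx⟩ := (add_eq_zero_iff_of_nonneg (by positivity) (by positivity)).1 hsum
  exact ⟨by simpa using hpx, by simpa using hqx⟩

theorem ker_eq_orthogonal_of_mem_of_apply_eq_self (hp : IsSelfAdjoint p) (hpK : ∀ x, p x ∈ K)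
    (hfix : ∀ x ∈ K, p x = x) : p.ker = Kᗮ := by
  ext x
  refine ⟨fun hx k hk => ?_, fun hx => ?_⟩
  · calc ⟪k, x⟫_𝕜 = ⟪p k, x⟫_𝕜 := by rw [hfix k hk]
      _ = ⟪k, p x⟫_𝕜 := hp.isSymmetric _ _
      _ = 0 := by rw [show p x = 0 from hx, inner_zero_right]
  · have hnorm := (isStarProjection_of_mem_of_apply_eq_self hp hpK hfix).re_inner_apply_self x
    rw [Submodule.inner_right_of_mem_orthogonal (hpK x) hx, map_zero, eq_comm] at hnorm
    simpa using hnorm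

end ContinuousLinearMap

theorem stmt_9_general {V : Type*} [NormedAddCommGroup V] [InnerProductSpace ℝ V] [CompleteSpace V]
    (K L : Submodule ℝ V)
    (hsup : K ⊔ L = ⊤) (hinf : K ⊓ L = ⊥)
    (P Q : V →L[ℝ] V) (hPsa : IsSelfAdjoint P) (hQsa : IsSelfAdjoint Q)
    (hPK : ∀ x, P x ∈ K) (hPfix : ∀ x ∈ K, P x = x)
    (hQL : ∀ x, Q x ∈ L) (hQfix : ∀ x ∈ L, Q x = x) :
    ((P + Q).IsPositive ∧ Function.Injective (P + Q)) ∧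
    (((2 : V →L[ℝ] V) - (P + Q)).IsPositive ∧ Function.Injective ((2 : V →L[ℝ] V) - (P + Q))) := by
  have hP := isStarProjection_of_mem_of_apply_eq_self hPsa hPK hPfix
  have hQ := isStarProjection_of_mem_of_apply_eq_self hQsa hQL hQfix
  have hker : (P + Q).ker = ⊥ := by
    rw [hP.ker_add hQ, ker_eq_orthogonal_of_mem_of_apply_eq_self hPsa hPK hPfix,
      ker_eq_orthogonal_of_mem_of_apply_eq_self hQsa hQL hQfix, Submodule.inf_orthogonal, hsup,
      Submodule.top_orthogonal_eq_bot]
  have hker' : ((1 - P) + (1 - Q)).ker = ⊥ := by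
    rw [hP.one_sub.ker_add hQ.one_sub, ker_one_sub_eq_of_mem_of_apply_eq_self hPK hPfix,
      ker_one_sub_eq_of_mem_of_apply_eq_self hQL hQfix, hinf]
  have hcompl : (2 : V →L[ℝ] V) - (P + Q) = (1 - P) + (1 - Q) := by
    rw [← one_add_one_eq_two]; abel
  rw [hcompl]
  exact ⟨⟨(IsPositive.of_isStarProjection hP).add (.of_isStarProjection hQ),
      LinearMap.ker_eq_bot.1 hker⟩,
    ⟨(IsPositive.of_isStarProjection hP.one_sub).add (.of_isStarProjection hQ.one_sub),
      LinearMap.ker_eq_bot.1 hker'⟩⟩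

theorem stmt_9 {V : Type*} [NormedAddCommGroup V] [InnerProductSpace ℝ V] [CompleteSpace V]
    (K L : Submodule ℝ V) (hKc : IsClosed (K : Set V)) (hLc : IsClosed (L : Set V))
    (hsup : K ⊔ L = ⊤) (hinf : K ⊓ L = ⊥)
    (P Q : V →L[ℝ] V) (hPsa : IsSelfAdjoint P) (hQsa : IsSelfAdjoint Q)
    (hPK : ∀ x, P x ∈ K) (hPfix : ∀ x ∈ K, P x = x)
    (hQL : ∀ x, Q x ∈ L) (hQfix : ∀ x ∈ L, Q x = x) :
    ((P + Q).IsPositive ∧ Function.Injective (P + Q)) ∧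
    (((2 : V →L[ℝ] V) - (P + Q)).IsPositive ∧ Function.Injective ((2 : V →L[ℝ] V) - (P + Q))) :=
  stmt_9_general K L hsup hinf P Q hPsa hQsa hPK hPfix hQL hQfix
end

section
/- With J as in the polar decomposition P-Q = JT (T strictly positive), one has PJP = PT ≥ 0 and QJQ = -QT ≤ 0; in particular s(Jy,y) ≥ 0 for y in K and s(Jz,z) ≤ 0 for z in L. -/
/-!
Since `T` commutes with `P` and `J`, both `T * (P * J * P) = P * (P - Q) * P` and
`T * (P * T) = P * (P - Q) ^ 2` equal `P - P * Q * P`; cancelling the injective `T` gives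
`P * J * P = P * T`, and `P * T = P * T * P` is positive as a conjugate of `T`. Exchanging the roles
of `K` and `L` replaces `J` by `-J`. For `y ∈ K` one has `⟪J y, y⟫ = ⟪P J P y, y⟫`.
-/

open scoped RealInnerProductSpace

open ContinuousLinearMap

theorem isIdempotentElem_of_retraction {R M : Type*} [Semiring R] [TopologicalSpace M]
    [AddCommMonoid M] [Module R M] {K : Submodule R M} {P : M →L[R] M}
    (hPK : ∀ x, P x ∈ K) (hPfix : ∀ x ∈ K, P x = x) : IsIdempotentElem P :=
  ContinuousLinearMap.ext fun x => hPfix _ (hPK x)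

theorem polar_factor_mul_compression {R : Type*} [Ring R] {P Q J T : R}
    (hP : IsIdempotentElem P) (hQ : IsIdempotentElem Q) (hTP : Commute T P) (hTJ : Commute T J)
    (hT2 : T * T = (P - Q) * (P - Q)) (hJT : P - Q = J * T) :
    T * (P * J * P) = T * (P * T) := by
  calc T * (P * J * P) = P * (J * T) * P := by
        rw [← mul_assoc, ← mul_assoc, hTP.eq, mul_assoc P T J, hTJ.eq, ← mul_assoc]
    _ = P * ((P - Q) * (P - Q)) := by
        rw [← hJT]
        simp only [mul_sub, sub_mul, ← mul_assoc, hP.eq, hQ.eq]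
        abel
    _ = T * (P * T) := by rw [← hT2, ← mul_assoc, ← mul_assoc, hTP.eq]

theorem compression_eq_of_polar {R M : Type*} [Ring R] [TopologicalSpace M]
    [AddCommGroup M] [Module R M] [IsTopologicalAddGroup M] {P Q J T : M →L[R] M}
    (hP : IsIdempotentElem P) (hQ : IsIdempotentElem Q) (hTP : Commute T P) (hTJ : Commute T J)
    (hT2 : T * T = (P - Q) * (P - Q)) (hJT : P - Q = J * T) (hTinj : Function.Injective T) :
    P * J * P = P * T := by
  have h := polar_factor_mul_compression hP hQ hTP hTJ hT2 hJT
  ext x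
  exact hTinj congr($h x)

section InnerProduct

variable {𝕜 E : Type*} [RCLike 𝕜] [NormedAddCommGroup E] [InnerProductSpace 𝕜 E] [CompleteSpace E]

theorem ContinuousLinearMap.IsPositive.mul_of_isStarProjection_of_commute {P T : E →L[𝕜] E}
    (hT : T.IsPositive) (hP : IsStarProjection P) (hTP : Commute T P) : (P * T).IsPositive := by
  have h : P * T = P ∘L T ∘L adjoint P := by
    rw [hP.isSelfAdjoint.adjoint_eq]
    change P * T = P * T * P
    conv_rhs => rw [mul_assoc, hTP.eq, ← mul_assoc, hP.isIdempotentElem.eq]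
  rw [h]
  exact hT.conj_adjoint P

theorem inner_compression_apply_self {P : E →L[𝕜] E} (hP : IsSelfAdjoint P) (A : E →L[𝕜] E)
    {y : E} (hy : P y = y) : inner 𝕜 ((P * A * P) y) y = inner 𝕜 (A y) y := by
  change inner 𝕜 (P (A (P y))) y = _
  rw [← adjoint_inner_right, hP.adjoint_eq, hy]

end InnerProduct

theorem stmt_12_general {V : Type*} [NormedAddCommGroup V] [InnerProductSpace ℝ V] [CompleteSpace V]
    (K L : Submodule ℝ V)
    (P Q : V →L[ℝ] V) (hPsa : IsSelfAdjoint P) (hQsa : IsSelfAdjoint Q)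
    (hPK : ∀ x, P x ∈ K) (hPfix : ∀ x ∈ K, P x = x)
    (hQL : ∀ x, Q x ∈ L) (hQfix : ∀ x ∈ L, Q x = x)
    (J T : V →L[ℝ] V)
    (hT : T.IsPositive) (hTinj : Function.Injective T)
    (hT2 : T * T = (P - Q) * (P - Q)) (hJT : P - Q = J * T)
    (hTP : T * P = P * T) (hTQ : T * Q = Q * T) (hTJ : T * J = J * T) :
    (P * J * P = P * T ∧ (P * J * P).IsPositive) ∧
    (Q * J * Q = -(Q * T) ∧ (-(Q * J * Q)).IsPositive) ∧
    (∀ y ∈ K, 0 ≤ ⟪J y, y⟫) ∧ (∀ z ∈ L, ⟪J z, z⟫ ≤ 0) := by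
  have hP : IsStarProjection P := ⟨isIdempotentElem_of_retraction hPK hPfix, hPsa⟩
  have hQ : IsStarProjection Q := ⟨isIdempotentElem_of_retraction hQL hQfix, hQsa⟩
  have hPJP : P * J * P = P * T :=
    compression_eq_of_polar hP.isIdempotentElem hQ.isIdempotentElem hTP hTJ hT2 hJT hTinj
  have hQJQ : Q * J * Q = -(Q * T) := by
    have h := compression_eq_of_polar hQ.isIdempotentElem hP.isIdempotentElem hTQ
      (Commute.neg_right hTJ) (by rw [hT2]; noncomm_ring) (by rw [← neg_sub, hJT, neg_mul]) hTinj
    rw [← h]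
    noncomm_ring
  have hPT := hT.mul_of_isStarProjection_of_commute hP hTP
  have hQT := hT.mul_of_isStarProjection_of_commute hQ hTQ
  refine ⟨⟨hPJP, hPJP ▸ hPT⟩, ⟨hQJQ, by rwa [hQJQ, neg_neg]⟩, fun y hy => ?_, fun z hz => ?_⟩
  · rw [← inner_compression_apply_self hPsa J (hPfix y hy), hPJP]
    exact hPT.inner_nonneg_left y
  · rw [← inner_compression_apply_self hQsa J (hQfix z hz), hQJQ, neg_apply, inner_neg_left,
      neg_nonpos]
    exact hQT.inner_nonneg_left z

theorem stmt_12 {V : Type*} [NormedAddCommGroup V] [InnerProductSpace ℝ V] [CompleteSpace V]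
    (K L : Submodule ℝ V) (hKc : IsClosed (K : Set V)) (hLc : IsClosed (L : Set V))
    (hsup : K ⊔ L = ⊤) (hinf : K ⊓ L = ⊥)
    (P Q : V →L[ℝ] V) (hPsa : IsSelfAdjoint P) (hQsa : IsSelfAdjoint Q)
    (hPK : ∀ x, P x ∈ K) (hPfix : ∀ x ∈ K, P x = x)
    (hQL : ∀ x, Q x ∈ L) (hQfix : ∀ x ∈ L, Q x = x)
    (J T : V →L[ℝ] V) (hJsa : IsSelfAdjoint J) (hJ2 : J * J = 1)
    (hT : T.IsPositive) (hTinj : Function.Injective T)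
    (hT2 : T * T = (P - Q) * (P - Q)) (hJT : P - Q = J * T)
    (hTP : T * P = P * T) (hTQ : T * Q = Q * T) (hTJ : T * J = J * T) :
    (P * J * P = P * T ∧ (P * J * P).IsPositive) ∧
    (Q * J * Q = -(Q * T) ∧ (-(Q * J * Q)).IsPositive) ∧
    (∀ y ∈ K, 0 ≤ ⟪J y, y⟫) ∧ (∀ z ∈ L, ⟪J z, z⟫ ≤ 0) :=
  stmt_12_general K L P Q hPsa hQsa hPK hPfix hQL hQfix J T hT hTinj hT2 hJT hTP hTQ hTJ
end

section
/- With J the isometric factor of the polar decomposition of P-Q, one has JK = L⊥ and JL = K⊥, where K, L are the ranges of P, Q. -/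
/-! With `A = P - Q` and `B = P + Q - 1` one has `A B = -B A`, so `B` commutes with `A² = T²`.
If `E` is the projection onto `K` along `L`, then `E + E⋆ - 1` inverts `A`, so `T = J A` is an
invertible positive operator, hence coercive. An operator anticommuting with a coercive positive
`T` vanishes (compare norms in `(‖T‖ + T) D = D (‖T‖ - T)`); applied to `D = B T - T B` this
shows that `B` commutes with `T`. Hence `J` commutes with `A` and anticommutes with `B`, that is,
`J P + Q J = J = J Q + P J`, which says that `J` maps `K` onto `Lᗮ` and `L` onto `Kᗮ`. -/

open InnerProductSpace

section Algebra

variable {R : Type*} [Ring R]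

theorem sub_mul_add_sub_one_eq_neg {P Q : R} (hP : IsIdempotentElem P) (hQ : IsIdempotentElem Q) :
    (P - Q) * (P + Q - 1) = -((P + Q - 1) * (P - Q)) := by
  rw [eq_neg_iff_add_eq_zero]
  calc (P - Q) * (P + Q - 1) + (P + Q - 1) * (P - Q) = 2 * (P * P - P) - 2 * (Q * Q - Q) := by
        noncomm_ring
    _ = 0 := by rw [hP.eq, hQ.eq]; simp

theorem commute_mul_self_of_mul_eq_neg {a b : R} (h : a * b = -(b * a)) : Commute b (a * a) := by
  have h' : b * a = -(a * b) := by rw [h, neg_neg]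
  show b * (a * a) = a * a * b
  rw [← mul_assoc, h', neg_mul, mul_assoc, h', mul_neg, neg_neg, ← mul_assoc]

theorem mul_add_mul_eq_of_commute_of_mul_eq_neg [IsAddTorsionFree R] {J P Q : R}
    (hA : Commute J (P - Q)) (hB : J * (P + Q - 1) = -((P + Q - 1) * J)) :
    J * P + Q * J = J := by
  rw [← sub_eq_zero]
  apply nsmul_right_injective two_ne_zero
  calc 2 • (J * P + Q * J - J)
      = (J * (P - Q) - (P - Q) * J) + (J * (P + Q - 1) + (P + Q - 1) * J) := by
        rw [two_nsmul]; noncomm_ring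
    _ = 2 • 0 := by rw [hA.eq, sub_self, hB, neg_add_cancel, add_zero, smul_zero]

-- `E` is the projection onto the range of `P` along the range of `Q`.
theorem isUnit_sub_of_isSelfAdjoint [StarRing R] {E P Q : R} (hP : IsSelfAdjoint P)
    (hQ : IsSelfAdjoint Q) (hPE : P * E = E) (hEP : E * P = P) (hEQ : E * Q = 0)
    (hQE : Q * (1 - E) = 1 - E) : IsUnit (P - Q) := by
  have hEsP : star E * P = star E := by
    rw [← hP.star_eq, ← star_mul, hPE]
  have hEsQ : star E * Q = star E + Q - 1 := by
    have hQE' : Q * E = E + Q - 1 := by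
      calc Q * E = Q - Q * (1 - E) := by noncomm_ring
        _ = E + Q - 1 := by rw [hQE]; abel
    rw [← hQ.star_eq, ← star_mul, hQE', star_sub, star_add, star_one, hQ.star_eq]
  have hleft : (E + star E - 1) * (P - Q) = 1 := by
    calc (E + star E - 1) * (P - Q) = E * P - E * Q + (star E * P - star E * Q) - P + Q := by
          noncomm_ring
      _ = 1 := by rw [hEP, hEQ, hEsP, hEsQ]; abel
  have hright : (P - Q) * (E + star E - 1) = 1 := by
    simpa [star_mul, (hP.sub hQ).star_eq, add_comm] using congrArg star hleft
  exact ⟨⟨P - Q, E + star E - 1, hright, hleft⟩, rfl⟩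

end Algebra

namespace ContinuousLinearMap

theorem eq_zero_of_comp_eq_comp {𝕜 E F : Type*} [NontriviallyNormedField 𝕜]
    [NormedAddCommGroup E] [NormedSpace 𝕜 E] [NormedAddCommGroup F] [NormedSpace 𝕜 F]
    {D : E →L[𝕜] F} {U : E →L[𝕜] E} {W : F →L[𝕜] F} {a b : ℝ} (ha : 0 ≤ a) (hab : a < b)
    (hU : ∀ x, ‖U x‖ ≤ a * ‖x‖) (hW : ∀ y, b * ‖y‖ ≤ ‖W y‖) (h : W ∘L D = D ∘L U) : D = 0 := by
  have hb : 0 < b := ha.trans_lt hab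
  have hbound : ‖D‖ ≤ a / b * ‖D‖ := by
    refine D.opNorm_le_bound (by positivity) fun x => ?_
    rw [div_mul_eq_mul_div, div_mul_eq_mul_div, le_div_iff₀' hb]
    calc b * ‖D x‖ ≤ ‖W (D x)‖ := hW (D x)
      _ = ‖D (U x)‖ := by rw [← comp_apply, h, comp_apply]
      _ ≤ ‖D‖ * (a * ‖x‖) := (D.le_opNorm _).trans (by gcongr; exact hU x)
      _ = a * ‖D‖ * ‖x‖ := by ring
  have : ‖D‖ ≤ 0 := by
    have h1 : a / b < 1 := (div_lt_one hb).mpr hab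
    nlinarith [norm_nonneg D]
  exact norm_le_zero_iff.mp this

variable {E : Type*} [NormedAddCommGroup E] [InnerProductSpace ℝ E] {T : E →L[ℝ] E}

theorem IsPositive.norm_apply_sq_le (hT : T.IsPositive) (x : E) :
    ‖T x‖ ^ 2 ≤ ‖T‖ * ⟪T x, x⟫_ℝ := by
  set M := ‖T‖
  have hTT : ⟪T (T x), T x⟫_ℝ ≤ M * ‖T x‖ ^ 2 := by
    calc ⟪T (T x), T x⟫_ℝ ≤ ‖T (T x)‖ * ‖T x‖ := real_inner_le_norm _ _
      _ ≤ M * ‖T x‖ * ‖T x‖ := by gcongr; exact T.le_opNorm _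
      _ = M * ‖T x‖ ^ 2 := by ring
  have hpos := hT.inner_nonneg_left (M • x - T x)
  have hsymm : ⟪T (T x), x⟫_ℝ = ‖T x‖ ^ 2 := by
    rw [hT.inner_left_eq_inner_right, real_inner_self_eq_norm_sq]
  have hsymm' : ⟪T x, T x⟫_ℝ = ‖T x‖ ^ 2 := real_inner_self_eq_norm_sq _
  simp only [map_sub, map_smul, inner_sub_left, inner_sub_right, real_inner_smul_left,
    real_inner_smul_right, hsymm, hsymm'] at hpos
  rcases (norm_nonneg T).eq_or_lt with hM | hM
  · have : T x = 0 := by simpa [← hM] using T.le_opNorm x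
    simp [this]
  · nlinarith

theorem IsPositive.norm_smul_sub_apply_le (hT : T.IsPositive) {M : ℝ} (hM : ‖T‖ ≤ M) (x : E) :
    ‖M • x - T x‖ ≤ M * ‖x‖ := by
  have hM₀ : 0 ≤ M := (norm_nonneg T).trans hM
  have hTx : ‖T x‖ ^ 2 ≤ M * ⟪T x, x⟫_ℝ :=
    (hT.norm_apply_sq_le x).trans (by gcongr; exact hT.inner_nonneg_left x)
  rw [← sq_le_sq₀ (norm_nonneg _) (by positivity), norm_sub_sq_real, norm_smul,
    real_inner_smul_left, real_inner_comm, Real.norm_of_nonneg hM₀]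
  nlinarith [hT.inner_nonneg_left x]

theorem le_norm_smul_add_apply {c : ℝ} (hc : ∀ x, c * ‖x‖ ^ 2 ≤ ⟪T x, x⟫_ℝ) (M : ℝ) (x : E) :
    (M + c) * ‖x‖ ≤ ‖M • x + T x‖ := by
  rcases (norm_nonneg x).eq_or_lt with hx | hx
  · simp [← hx]
  refine le_of_mul_le_mul_right ?_ hx
  calc (M + c) * ‖x‖ * ‖x‖ ≤ ⟪M • x + T x, x⟫_ℝ := by
        rw [inner_add_left, real_inner_smul_left, real_inner_self_eq_norm_sq]
        nlinarith [hc x]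
    _ ≤ ‖M • x + T x‖ * ‖x‖ := real_inner_le_norm _ _

theorem IsPositive.eq_zero_of_mul_add_mul_eq_zero (hT : T.IsPositive) {c : ℝ} (hc₀ : 0 < c)
    (hc : ∀ x, c * ‖x‖ ^ 2 ≤ ⟪T x, x⟫_ℝ) {D : E →L[ℝ] E} (hD : T * D + D * T = 0) : D = 0 := by
  set M := ‖T‖
  have hTD : T * D = -(D * T) := eq_neg_of_add_eq_zero_left hD
  -- `(M + T) D = D (M - T)`, where `‖M - T‖ ≤ M` while `M + T` is bounded below by `M + c`
  refine eq_zero_of_comp_eq_comp (U := M • 1 - T) (W := M • 1 + T) (norm_nonneg T)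
    (lt_add_of_pos_right M hc₀) (hT.norm_smul_sub_apply_le le_rfl) (le_norm_smul_add_apply hc M) ?_
  show (M • 1 + T) * D = D * (M • 1 - T)
  rw [add_mul, mul_sub, hTD, smul_mul_assoc, mul_smul_comm, one_mul, mul_one, sub_eq_add_neg]

theorem IsPositive.commute_of_commute_mul_self_s13 (hT : T.IsPositive) {c : ℝ} (hc₀ : 0 < c)
    (hc : ∀ x, c * ‖x‖ ^ 2 ≤ ⟪T x, x⟫_ℝ) {B : E →L[ℝ] E} (hB : Commute B (T * T)) :
    Commute B T := by
  refine sub_eq_zero.mp (hT.eq_zero_of_mul_add_mul_eq_zero hc₀ hc ?_)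
  calc T * (B * T - T * B) + (B * T - T * B) * T = B * (T * T) - T * T * B := by noncomm_ring
    _ = 0 := sub_eq_zero.mpr hB.eq

theorem IsPositive.exists_coercive_of_isUnit (hT : T.IsPositive) (hTu : IsUnit T) :
    ∃ c > 0, ∀ x, c * ‖x‖ ^ 2 ≤ ⟪T x, x⟫_ℝ := by
  obtain ⟨S, hST⟩ : ∃ S : E →L[ℝ] E, S * T = 1 := ⟨↑hTu.unit⁻¹, hTu.val_inv_mul⟩
  have hC : 0 < ‖S‖ ^ 2 * ‖T‖ + 1 := by positivity
  refine ⟨(‖S‖ ^ 2 * ‖T‖ + 1)⁻¹, inv_pos.mpr hC, fun x => ?_⟩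
  have hx : ‖x‖ ≤ ‖S‖ * ‖T x‖ := by
    have hSTx : S (T x) = x := by simpa using DFunLike.congr_fun hST x
    simpa only [hSTx] using S.le_opNorm (T x)
  have hx2 : ‖x‖ ^ 2 ≤ ‖S‖ ^ 2 * ‖T x‖ ^ 2 := by
    rw [← mul_pow]; gcongr
  rw [inv_mul_le_iff₀ hC]
  nlinarith [hT.norm_apply_sq_le x, hT.inner_nonneg_left x, sq_nonneg ‖S‖]

end ContinuousLinearMap

namespace Submodule

variable {𝕜 E : Type*} [RCLike 𝕜] [NormedAddCommGroup E] [InnerProductSpace 𝕜 E]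
  {K L : Submodule 𝕜 E} [K.HasOrthogonalProjection] [L.HasOrthogonalProjection]

theorem map_eq_orthogonal_of_mul_starProjection_add {J : E →L[𝕜] E} (hJ : J * J = 1)
    (h₁ : J * K.starProjection + L.starProjection * J = J)
    (h₂ : J * L.starProjection + K.starProjection * J = J) :
    K.map (J : E →ₗ[𝕜] E) = Lᗮ := by
  have h₁' : ∀ x, J (K.starProjection x) + L.starProjection (J x) = J x := fun x => by
    simpa using DFunLike.congr_fun h₁ x
  have h₂' : ∀ x, J (L.starProjection x) + K.starProjection (J x) = J x := fun x => by
    simpa using DFunLike.congr_fun h₂ x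
  ext y
  rw [mem_map, ← L.starProjection_apply_eq_zero_iff]
  constructor
  · rintro ⟨x, hx, rfl⟩
    simpa [K.starProjection_eq_self_iff.mpr hx] using h₁' x
  · intro hy
    refine ⟨J y, ?_, by simpa using DFunLike.congr_fun hJ y⟩
    rw [← K.starProjection_eq_self_iff]
    simpa [hy] using h₂' y

variable [CompleteSpace E]

theorem eq_starProjection_of_isSelfAdjoint {P : E →L[𝕜] E} (hP : IsSelfAdjoint P)
    (hPK : ∀ x, P x ∈ K) (hPfix : ∀ x ∈ K, P x = x) : P = K.starProjection := by
  ext x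
  refine (eq_starProjection_of_mem_of_inner_eq_zero (hPK x) fun w hw => ?_).symm
  rw [inner_sub_left, ← ContinuousLinearMap.adjoint_inner_right, hP.adjoint_eq, hPfix w hw,
    sub_self]

theorem isUnit_starProjection_sub_starProjection (h : IsTopCompl K L) :
    IsUnit (K.starProjection - L.starProjection) := by
  refine isUnit_sub_of_isSelfAdjoint (E := K.projectionL L h) (isSelfAdjoint_starProjection K)
    (isSelfAdjoint_starProjection L) ?_ ?_ ?_ ?_ <;> ext x
  · exact K.starProjection_eq_self_iff.mpr (projectionL_apply_mem h x)
  · exact (projectionL_eq_self_iff h _).mpr (K.starProjection_apply_mem x)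
  · exact (projectionL_apply_eq_zero_iff h).mpr (L.starProjection_apply_mem x)
  · have hx : (1 - K.projectionL L h) x = L.projectionL K h.symm x :=
      (projectionL_eq_self_sub_projectionL h x).symm
    show L.starProjection ((1 - K.projectionL L h) x) = _
    rw [hx]
    exact L.starProjection_eq_self_iff.mpr (projectionL_apply_mem h.symm x)

end Submodule

open ContinuousLinearMap Submodule in
theorem stmt_13 {V : Type*} [NormedAddCommGroup V] [InnerProductSpace ℝ V] [CompleteSpace V]
    (K L : Submodule ℝ V) (hKc : IsClosed (K : Set V)) (hLc : IsClosed (L : Set V))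
    (hsup : K ⊔ L = ⊤) (hinf : K ⊓ L = ⊥)
    (P Q : V →L[ℝ] V) (hPsa : IsSelfAdjoint P) (hQsa : IsSelfAdjoint Q)
    (hPK : ∀ x, P x ∈ K) (hPfix : ∀ x ∈ K, P x = x)
    (hQL : ∀ x, Q x ∈ L) (hQfix : ∀ x ∈ L, Q x = x)
    (J T : V →L[ℝ] V) (hJsa : IsSelfAdjoint J) (hJ2 : J * J = 1)
    (hT : T.IsPositive) (hT2 : T * T = (P - Q) * (P - Q)) (hJT : P - Q = J * T) :
    K.map (J : V →ₗ[ℝ] V) = Lᗮ ∧ L.map (J : V →ₗ[ℝ] V) = Kᗮ := by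
  have hKL : IsTopCompl K L :=
    IsCompl.isTopCompl_of_isClosed ⟨disjoint_iff.mpr hinf, codisjoint_iff.mpr hsup⟩ hKc hLc
  have := hKc.completeSpace_coe
  have := hLc.completeSpace_coe
  obtain rfl := eq_starProjection_of_isSelfAdjoint hPsa hPK hPfix
  obtain rfl := eq_starProjection_of_isSelfAdjoint hQsa hQL hQfix
  set P := K.starProjection
  set Q := L.starProjection
  have hA : IsUnit (P - Q) := isUnit_starProjection_sub_starProjection hKL
  have hTA : T = J * (P - Q) := by rw [hJT, ← mul_assoc, hJ2, one_mul]
  have hTu : IsUnit T := hTA ▸ (Units.mk J J hJ2 hJ2).isUnit.mul hA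
  obtain ⟨c, hc₀, hc⟩ := hT.exists_coercive_of_isUnit hTu
  have hAB : (P - Q) * (P + Q - 1) = -((P + Q - 1) * (P - Q)) :=
    sub_mul_add_sub_one_eq_neg K.isIdempotentElem_starProjection L.isIdempotentElem_starProjection
  have hBT : Commute (P + Q - 1) T :=
    hT.commute_of_commute_mul_self_s13 hc₀ hc (hT2 ▸ commute_mul_self_of_mul_eq_neg hAB)
  have hAT : P - Q = T * J := by
    simpa [star_mul, hJsa.star_eq, hT.isSelfAdjoint.star_eq, (hPsa.sub hQsa).star_eq]
      using congrArg star hJT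
  have hJA : Commute J (P - Q) := by
    show J * (P - Q) = (P - Q) * J
    rw [← hTA, hAT, mul_assoc, hJ2, mul_one]
  have hJB : J * (P + Q - 1) = -((P + Q - 1) * J) := by
    rw [eq_neg_iff_add_eq_zero, ← hTu.mul_left_eq_zero, add_mul, mul_assoc, hBT.eq,
      ← mul_assoc, ← hJT, mul_assoc, ← hJT, hAB, neg_add_cancel]
  have : IsAddTorsionFree (V →L[ℝ] V) := .of_isTorsionFree ℝ _
  have h₁ : J * P + Q * J = J := mul_add_mul_eq_of_commute_of_mul_eq_neg hJA hJB
  have h₂ : J * Q + P * J = J := mul_add_mul_eq_of_commute_of_mul_eq_neg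
    (by simpa using hJA.neg_right) (by rwa [add_comm Q])
  exact ⟨map_eq_orthogonal_of_mul_starProjection_add hJ2 h₁ h₂,
    map_eq_orthogonal_of_mul_starProjection_add hJ2 h₂ h₁⟩
end

section
/- Let S = {x : Tx = x}. If x ∈ S decomposes as x = y + z with y ∈ K, z ∈ L, then y ∈ S and z ∈ S. -/
theorem stmt_15 {V : Type*} [NormedAddCommGroup V] [InnerProductSpace ℝ V] [CompleteSpace V]
    (K L : Submodule ℝ V) (hKc : IsClosed (K : Set V)) (hLc : IsClosed (L : Set V))
    (hsup : K ⊔ L = ⊤) (hinf : K ⊓ L = ⊥)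
    (P Q : V →L[ℝ] V) (hPsa : IsSelfAdjoint P) (hQsa : IsSelfAdjoint Q)
    (hPK : ∀ x, P x ∈ K) (hPfix : ∀ x ∈ K, P x = x)
    (hQL : ∀ x, Q x ∈ L) (hQfix : ∀ x ∈ L, Q x = x)
    (T : V →L[ℝ] V) (hT : T.IsPositive) (hT2 : T * T = (P - Q) * (P - Q))
    (hTP : T * P = P * T) (hTQ : T * Q = Q * T)
    (x y z : V) (hx : T x = x) (hy : y ∈ K) (hz : z ∈ L) (hxyz : x = y + z) :
    T y = y ∧ T z = z := by
  have hTyK : T y ∈ K := by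
    have h1 : T (P y) = P (T y) := congrArg (fun f : V →L[ℝ] V => f y) hTP
    rw [hPfix y hy] at h1
    rw [h1]; exact hPK _
  have hTzL : T z ∈ L := by
    have h1 : T (Q z) = Q (T z) := congrArg (fun f : V →L[ℝ] V => f z) hTQ
    rw [hQfix z hz] at h1
    rw [h1]; exact hQL _
  have hsum : T y + T z = y + z := by
    have := hx
    rw [hxyz, map_add] at this
    exact this
  have hdiff : T y - y = z - T z := by
    have := hsum
    linear_combination (norm := abel_nf) this
  have hmem : T y - y ∈ K ⊓ L := by
    constructor
    · exact K.sub_mem hTyK hy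
    · rw [hdiff]; exact L.sub_mem hz hTzL
  rw [hinf] at hmem
  have h0 : T y - y = 0 := hmem
  constructor
  · exact sub_eq_zero.mp h0
  · have : z - T z = 0 := by rw [← hdiff]; exact h0
    have := sub_eq_zero.mp this
    exact this.symm
end

section
/- The symmetric subspace S = {x : Tx = x} satisfies S = (L⊥ ∩ K) + (K⊥ ∩ L); moreover S ∩ K = L⊥ ∩ K and S ∩ L = K⊥ ∩ L. -/
/-!
Put `A = 1 - P - Q`. Idempotence of `P` and `Q` gives `(P - Q)² + A² = 1`, so for every `x`:
`T x = x` iff `T² x = x` (positivity of `T` makes `T + 1` injective), iff `A² x = 0`, iff `A x = 0`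
(`A` is self-adjoint), i.e. iff `P x + Q x = x`. For such `x`, applying `Q` gives `Q P x = 0`, so
`x = P x + Q x` splits into a vector of `L⊥ ∩ K` and one of `K⊥ ∩ L`; conversely vectors of these
two spaces satisfy `P x + Q x = x` because `ker P = K⊥` and `ker Q = L⊥`.
-/

theorem IsIdempotentElem.sub_mul_sub_add_one_sub_sub_mul {R : Type*} [Ring R] {p q : R}
    (hp : IsIdempotentElem p) (hq : IsIdempotentElem q) :
    (p - q) * (p - q) + (1 - p - q) * (1 - p - q) = 1 := by
  simp only [sub_mul, mul_sub, one_mul, mul_one, hp.eq, hq.eq]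
  abel

section

variable {𝕜 E : Type*} [RCLike 𝕜] [NormedAddCommGroup E] [InnerProductSpace 𝕜 E]

open scoped InnerProductSpace

namespace LinearMap

variable {K L : Submodule 𝕜 E} {p q : E →ₗ[𝕜] E}

theorem IsProj.ker_eq_orthogonal (hp : IsProj K p) (hps : p.IsSymmetric) : ker p = Kᗮ := by
  rw [← hp.range, hps.orthogonal_range]

theorem mem_ker_add_sub_one_iff {x : E} : x ∈ ker (p + q - 1) ↔ p x + q x = x := by
  simp [sub_eq_zero]

theorem IsProj.ker_add_sub_one_inf (hp : IsProj K p) (hq : IsProj L q) (hqs : q.IsSymmetric) :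
    ker (p + q - 1) ⊓ K = Lᗮ ⊓ K := by
  ext x
  rw [Submodule.mem_inf, mem_ker_add_sub_one_iff, Submodule.mem_inf, ← hq.ker_eq_orthogonal hqs,
    mem_ker]
  exact and_congr_left fun hx => by rw [hp.map_id x hx, add_eq_left]

theorem IsProj.apply_mem_orthogonal_inf_of_add_apply_eq_self (hp : IsProj K p) (hq : IsProj L q)
    (hqs : q.IsSymmetric) {x : E} (hx : p x + q x = x) : p x ∈ Lᗮ ⊓ K := by
  have hqp : q (p x) + q x = q x :=
    calc q (p x) + q x = q (p x) + q (q x) := by rw [hq.map_id _ (hq.map_mem x)]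
      _ = q x := by rw [← map_add, hx]
  rw [← hq.ker_eq_orthogonal hqs]
  exact ⟨add_eq_right.mp hqp, hp.map_mem x⟩

theorem IsProj.ker_add_sub_one (hp : IsProj K p) (hq : IsProj L q) (hps : p.IsSymmetric)
    (hqs : q.IsSymmetric) : ker (p + q - 1) = Lᗮ ⊓ K ⊔ Kᗮ ⊓ L := by
  refine le_antisymm (fun x hx => ?_) (sup_le ?_ ?_)
  · rw [mem_ker_add_sub_one_iff] at hx
    rw [← hx]
    exact Submodule.add_mem_sup (hp.apply_mem_orthogonal_inf_of_add_apply_eq_self hq hqs hx)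
      (hq.apply_mem_orthogonal_inf_of_add_apply_eq_self hp hps ((add_comm _ _).trans hx))
  · exact hp.ker_add_sub_one_inf hq hqs ▸ inf_le_left
  · exact add_comm p q ▸ hq.ker_add_sub_one_inf hp hps ▸ inf_le_left

end LinearMap

namespace ContinuousLinearMap

theorem IsPositive.apply_eq_self_iff_mul_self_apply_eq_self {T : E →L[𝕜] E} (hT : T.IsPositive)
    {x : E} : T x = x ↔ (T * T) x = x := by
  refine ⟨fun h => by rw [mul_apply_eq_comp, h, h], fun h => ?_⟩
  set y := T x - x
  have hTy : T y = -y := by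
    rw [mul_apply_eq_comp] at h
    simp only [y, map_sub, h]
    abel
  have : 0 ≤ RCLike.re ⟪T y, y⟫_𝕜 := hT.re_inner_nonneg_left y
  rw [hTy, inner_neg_left, map_neg, neg_nonneg, inner_self_eq_norm_sq] at this
  exact sub_eq_zero.mp (norm_eq_zero.mp (by nlinarith [norm_nonneg y]))

variable [CompleteSpace E]

theorem _root_.IsSelfAdjoint.mul_self_apply_eq_zero_iff {A : E →L[𝕜] E} (hA : IsSelfAdjoint A)
    {x : E} : (A * A) x = 0 ↔ A x = 0 := by
  have := A.ker_adjoint_comp_self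
  rw [hA.adjoint_eq] at this
  exact SetLike.ext_iff.mp this x

theorem ker_sub_one_eq_ker_add_sub_one {P Q T : E →L[𝕜] E} (hPs : IsSelfAdjoint P)
    (hQs : IsSelfAdjoint Q) (hPi : IsIdempotentElem P) (hQi : IsIdempotentElem Q)
    (hT : T.IsPositive) (hT2 : T * T = (P - Q) * (P - Q)) :
    LinearMap.ker ((T - 1 : E →L[𝕜] E) : E →ₗ[𝕜] E) =
      LinearMap.ker ((P : E →ₗ[𝕜] E) + (Q : E →ₗ[𝕜] E) - 1) := by
  set A := 1 - P - Q
  have hA : IsSelfAdjoint A := ((IsSelfAdjoint.one _).sub hPs).sub hQs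
  have hsum (x : E) : (T * T) x + (A * A) x = x := by
    rw [← add_apply, hT2, hPi.sub_mul_sub_add_one_sub_sub_mul hQi, one_apply_eq_self]
  ext x
  calc x ∈ LinearMap.ker ((T - 1 : E →L[𝕜] E) : E →ₗ[𝕜] E)
      ↔ T x = x := by simp [sub_eq_zero]
    _ ↔ (T * T) x = x := hT.apply_eq_self_iff_mul_self_apply_eq_self
    _ ↔ (A * A) x = 0 := by rw [← add_eq_left, hsum, eq_comm]
    _ ↔ A x = 0 := hA.mul_self_apply_eq_zero_iff
    _ ↔ x ∈ LinearMap.ker ((P : E →ₗ[𝕜] E) + (Q : E →ₗ[𝕜] E) - 1) := by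
      rw [LinearMap.mem_ker_add_sub_one_iff]
      simp only [A, sub_apply, one_apply_eq_self, sub_sub, sub_eq_zero]
      exact eq_comm

end ContinuousLinearMap

end

theorem stmt_16_general {V : Type*} [NormedAddCommGroup V] [InnerProductSpace ℝ V] [CompleteSpace V]
    (K L : Submodule ℝ V)
    (P Q : V →L[ℝ] V) (hPsa : IsSelfAdjoint P) (hQsa : IsSelfAdjoint Q)
    (hPK : ∀ x, P x ∈ K) (hPfix : ∀ x ∈ K, P x = x)
    (hQL : ∀ x, Q x ∈ L) (hQfix : ∀ x ∈ L, Q x = x)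
    (T : V →L[ℝ] V) (hT : T.IsPositive) (hT2 : T * T = (P - Q) * (P - Q)) :
    LinearMap.ker ((T - 1 : V →L[ℝ] V) : V →ₗ[ℝ] V) = (Lᗮ ⊓ K) ⊔ (Kᗮ ⊓ L) ∧
    LinearMap.ker ((T - 1 : V →L[ℝ] V) : V →ₗ[ℝ] V) ⊓ K = Lᗮ ⊓ K ∧
    LinearMap.ker ((T - 1 : V →L[ℝ] V) : V →ₗ[ℝ] V) ⊓ L = Kᗮ ⊓ L := by
  have hP : LinearMap.IsProj K (P : V →ₗ[ℝ] V) := ⟨hPK, hPfix⟩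
  have hQ : LinearMap.IsProj L (Q : V →ₗ[ℝ] V) := ⟨hQL, hQfix⟩
  rw [ContinuousLinearMap.ker_sub_one_eq_ker_add_sub_one hPsa hQsa
    (ContinuousLinearMap.isIdempotentElem_toLinearMap_iff.mp hP.isIdempotentElem)
    (ContinuousLinearMap.isIdempotentElem_toLinearMap_iff.mp hQ.isIdempotentElem) hT hT2]
  exact ⟨hP.ker_add_sub_one hQ hPsa.isSymmetric hQsa.isSymmetric,
    hP.ker_add_sub_one_inf hQ hQsa.isSymmetric,
    add_comm (P : V →ₗ[ℝ] V) Q ▸ hQ.ker_add_sub_one_inf hP hPsa.isSymmetric⟩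

theorem stmt_16 {V : Type*} [NormedAddCommGroup V] [InnerProductSpace ℝ V] [CompleteSpace V]
    (K L : Submodule ℝ V) (hKc : IsClosed (K : Set V)) (hLc : IsClosed (L : Set V))
    (hsup : K ⊔ L = ⊤) (hinf : K ⊓ L = ⊥)
    (P Q : V →L[ℝ] V) (hPsa : IsSelfAdjoint P) (hQsa : IsSelfAdjoint Q)
    (hPK : ∀ x, P x ∈ K) (hPfix : ∀ x ∈ K, P x = x)
    (hQL : ∀ x, Q x ∈ L) (hQfix : ∀ x ∈ L, Q x = x)
    (T : V →L[ℝ] V) (hT : T.IsPositive) (hT2 : T * T = (P - Q) * (P - Q)) :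
    LinearMap.ker ((T - 1 : V →L[ℝ] V) : V →ₗ[ℝ] V) = (Lᗮ ⊓ K) ⊔ (Kᗮ ⊓ L) ∧
    LinearMap.ker ((T - 1 : V →L[ℝ] V) : V →ₗ[ℝ] V) ⊓ K = Lᗮ ⊓ K ∧
    LinearMap.ker ((T - 1 : V →L[ℝ] V) : V →ₗ[ℝ] V) ⊓ L = Kᗮ ⊓ L :=
  stmt_16_general K L P Q hPsa hQsa hPK hPfix hQL hQfix T hT hT2
end

section
/- Define S(y+z) = y - z for y ∈ K, z ∈ L (well-defined since V = K ⊕ L), and Δ = (2I-(P+Q))(P+Q)^{-1}. Then S*S = Δ; more precisely S*S(P+Q) = 2I-(P+Q). -/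
/-!
Since `P x ∈ K` and `Q x ∈ L`, we have `S (P + Q) = P - Q`, and checking on `K` and on `L`
separately gives `(P - Q) S = 2 - (P + Q)`; taking adjoints yields `S† S (P + Q) = 2 - (P + Q)`.
The self-adjoint operator `P + Q` is injective, because `⟪v, (P + Q) v⟫ = ‖P v‖² + ‖Q v‖²` and a
vector orthogonal to both `K` and `L` is orthogonal to `K ⊔ L = ⊤`. Hence it has dense range and
can be cancelled on the right, so `S† S = Δ`.
-/

open ContinuousLinearMap

open scoped RealInnerProductSpace

section SelfAdjoint

variable {𝕜 E : Type*} [RCLike 𝕜] [NormedAddCommGroup E] [InnerProductSpace 𝕜 E] [CompleteSpace E]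

theorem IsSelfAdjoint.inner_map_of_map_eq_self {P : E →L[𝕜] E} (hP : IsSelfAdjoint P) {y : E}
    (hy : P y = y) (x : E) : inner 𝕜 (P x) y = inner 𝕜 x y := by
  rw [← adjoint_inner_right, hP.adjoint_eq, hy]

theorem IsSelfAdjoint.denseRange_of_ker_eq_bot {T : E →L[𝕜] E} (hT : IsSelfAdjoint T)
    (hker : T.ker = ⊥) : DenseRange T := by
  rw [DenseRange, ← coe_coe, ← LinearMap.coe_range, Submodule.dense_iff_topologicalClosure_eq_top,
    Submodule.topologicalClosure_eq_top_iff, orthogonal_range, hT.adjoint_eq, hker]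

end SelfAdjoint

theorem ContinuousLinearMap.eq_of_mul_eq_mul_of_denseRange {R M : Type*} [Semiring R]
    [TopologicalSpace M] [T2Space M] [AddCommMonoid M] [Module R M] {A B T : M →L[R] M}
    (hT : DenseRange T) (h : A * T = B * T) : A = B :=
  DFunLike.coe_injective <| hT.equalizer A.continuous B.continuous <| congrArg DFunLike.coe h

section Projections

variable {V : Type*} [NormedAddCommGroup V] [InnerProductSpace ℝ V] {K L : Submodule ℝ V}
  {P Q S : V →L[ℝ] V}

theorem reflection_mul_add_eq_sub (hPK : ∀ x, P x ∈ K) (hQL : ∀ x, Q x ∈ L)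
    (hSK : ∀ y ∈ K, S y = y) (hSL : ∀ z ∈ L, S z = -z) : S * (P + Q) = P - Q := by
  ext x
  simp [hSK _ (hPK x), hSL _ (hQL x), sub_eq_add_neg]

theorem sub_mul_reflection_eq_two_sub_add (hsup : K ⊔ L = ⊤)
    (hPfix : ∀ y ∈ K, P y = y) (hQfix : ∀ z ∈ L, Q z = z) (hSK : ∀ y ∈ K, S y = y)
    (hSL : ∀ z ∈ L, S z = -z) : (P - Q) * S = 2 - (P + Q) := by
  refine LinearMap.ext_on_codisjoint (codisjoint_iff.mpr hsup) (fun y hy => ?_) fun z hz => ?_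
  · simp [hSK y hy, hPfix y hy, two_smul]
  · simp [hSL z hz, hQfix z hz, two_smul]; abel

theorem ker_add_eq_bot_of_sup_eq_top [CompleteSpace V] (hsup : K ⊔ L = ⊤) (hP : IsSelfAdjoint P)
    (hQ : IsSelfAdjoint Q) (hPK : ∀ x, P x ∈ K) (hPfix : ∀ y ∈ K, P y = y)
    (hQL : ∀ x, Q x ∈ L) (hQfix : ∀ z ∈ L, Q z = z) : (P + Q).ker = ⊥ := by
  refine (Submodule.eq_bot_iff _).mpr fun v hv => ?_
  have hsum : ⟪P v, P v⟫ + ⟪Q v, Q v⟫ = 0 := by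
    rw [hP.inner_map_of_map_eq_self (hPfix _ (hPK v)),
      hQ.inner_map_of_map_eq_self (hQfix _ (hQL v)), ← inner_add_right]
    simpa using congrArg (⟪v, ·⟫) hv
  obtain ⟨hPv, hQv⟩ :=
    (add_eq_zero_iff_of_nonneg real_inner_self_nonneg real_inner_self_nonneg).mp hsum
  have hvK : v ∈ Kᗮ := (Submodule.mem_orthogonal' K v).mpr fun y hy => by
    rw [← hP.inner_map_of_map_eq_self (hPfix y hy), inner_self_eq_zero.mp hPv, inner_zero_left]
  have hvL : v ∈ Lᗮ := (Submodule.mem_orthogonal' L v).mpr fun z hz => by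
    rw [← hQ.inner_map_of_map_eq_self (hQfix z hz), inner_self_eq_zero.mp hQv, inner_zero_left]
  simpa [Submodule.inf_orthogonal, hsup] using Submodule.mem_inf.mpr ⟨hvK, hvL⟩

theorem adjoint_reflection_mul_self_mul_add [CompleteSpace V] (hsup : K ⊔ L = ⊤)
    (hP : IsSelfAdjoint P) (hQ : IsSelfAdjoint Q) (hPK : ∀ x, P x ∈ K) (hPfix : ∀ y ∈ K, P y = y)
    (hQL : ∀ x, Q x ∈ L) (hQfix : ∀ z ∈ L, Q z = z) (hSK : ∀ y ∈ K, S y = y)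
    (hSL : ∀ z ∈ L, S z = -z) : adjoint S * S * (P + Q) = 2 - (P + Q) := by
  have h2 : IsSelfAdjoint (2 - (P + Q)) := (IsSelfAdjoint.ofNat 2).sub (hP.add hQ)
  calc adjoint S * S * (P + Q) = adjoint S * (P - Q) := by
        rw [mul_assoc, reflection_mul_add_eq_sub hPK hQL hSK hSL]
    _ = adjoint ((P - Q) * S) := by
        rw [mul_def, mul_def, adjoint_comp, (hP.sub hQ).adjoint_eq]
    _ = 2 - (P + Q) := by
        rw [sub_mul_reflection_eq_two_sub_add hsup hPfix hQfix hSK hSL, h2.adjoint_eq]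

end Projections

open ContinuousLinearMap in
theorem stmt_17_general {V : Type*} [NormedAddCommGroup V] [InnerProductSpace ℝ V] [CompleteSpace V]
    (K L : Submodule ℝ V)
    (hsup : K ⊔ L = ⊤)
    (P Q : V →L[ℝ] V) (hPsa : IsSelfAdjoint P) (hQsa : IsSelfAdjoint Q)
    (hPK : ∀ x, P x ∈ K) (hPfix : ∀ x ∈ K, P x = x)
    (hQL : ∀ x, Q x ∈ L) (hQfix : ∀ x ∈ L, Q x = x)
    (S Δ : V →L[ℝ] V) (hSK : ∀ y ∈ K, S y = y) (hSL : ∀ z ∈ L, S z = -z)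
    -- `Δ = (2 - (P+Q)) / (P+Q)`, characterized by `Δ (P+Q) = 2 - (P+Q)`:
    (hΔ : Δ * (P + Q) = (2 : V →L[ℝ] V) - (P + Q)) :
    adjoint S * S * (P + Q) = (2 : V →L[ℝ] V) - (P + Q) ∧ adjoint S * S = Δ := by
  have hmain : adjoint S * S * (P + Q) = 2 - (P + Q) :=
    adjoint_reflection_mul_self_mul_add hsup hPsa hQsa hPK hPfix hQL hQfix hSK hSL
  have hdense : DenseRange (P + Q) := (hPsa.add hQsa).denseRange_of_ker_eq_bot
    (ker_add_eq_bot_of_sup_eq_top hsup hPsa hQsa hPK hPfix hQL hQfix)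
  exact ⟨hmain, eq_of_mul_eq_mul_of_denseRange hdense (hmain.trans hΔ.symm)⟩

open ContinuousLinearMap in
theorem stmt_17 {V : Type*} [NormedAddCommGroup V] [InnerProductSpace ℝ V] [CompleteSpace V]
    (K L : Submodule ℝ V) (hKc : IsClosed (K : Set V)) (hLc : IsClosed (L : Set V))
    (hsup : K ⊔ L = ⊤) (hinf : K ⊓ L = ⊥)
    (P Q : V →L[ℝ] V) (hPsa : IsSelfAdjoint P) (hQsa : IsSelfAdjoint Q)
    (hPK : ∀ x, P x ∈ K) (hPfix : ∀ x ∈ K, P x = x)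
    (hQL : ∀ x, Q x ∈ L) (hQfix : ∀ x ∈ L, Q x = x)
    (S Δ : V →L[ℝ] V) (hSK : ∀ y ∈ K, S y = y) (hSL : ∀ z ∈ L, S z = -z)
    -- `Δ = (2 - (P+Q)) / (P+Q)`, characterized by `Δ (P+Q) = 2 - (P+Q)`:
    (hΔ : Δ * (P + Q) = (2 : V →L[ℝ] V) - (P + Q)) :
    adjoint S * S * (P + Q) = (2 : V →L[ℝ] V) - (P + Q) ∧ adjoint S * S = Δ :=
  stmt_17_general K L hsup P Q hPsa hQsa hPK hPfix hQL hQfix S Δ hSK hSL hΔ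
end

section
/- With S the involution fixing K and negating L, one has (2I-(P+Q))S = P-Q and S*J = JS, and the polar decomposition of S is S = JΔ^{1/2} where Δ = (2I-(P+Q))/(P+Q). -/
/-!
Since `Δ (P + Q) = 2 - (P + Q)` and everything is self-adjoint, `P + Q` is invertible with
inverse `(1 + Δ) / 2`, which commutes with `Δ^{1/2}`. As `P, Q` are idempotent,
`(P - Q)² = (2 - (P + Q)) (P + Q)`, so `Δ^{1/2} (P + Q)` is a positive square root of `(P - Q)²`,
as is `T`. Because `P - Q = S (P + Q)` is invertible, `(P - Q)²` is coercive, and positive square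
roots of coercive operators are unique; hence `T = Δ^{1/2} (P + Q)`, and cancelling `P + Q` in
`S (P + Q) = P - Q = J T` gives `S = J Δ^{1/2}`.

Uniqueness: after rescaling, a coercive `M` satisfies `‖1 - M‖ < 1`, and the Banach fixed point
`F` of `X ↦ (1 - M + X²) / 2` yields the square root `1 - F`, which commutes with everything
commuting with `M`. Two commuting positive square roots `C, D`, one of them coercive, coincide
because `(C + D)(C - D) = 0` and `C + D` is injective.
-/

open scoped RealInnerProductSpace

theorem IsIdempotentElem.sub_mul_self_sub {R : Type*} [Ring R] {p q : R} (hp : IsIdempotentElem p)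
    (hq : IsIdempotentElem q) : (p - q) * (p - q) = (2 - (p + q)) * (p + q) := by
  have e : (p - q) * (p - q) - (2 - (p + q)) * (p + q) = 2 * (p * p - p) + 2 * (q * q - q) := by
    noncomm_ring
  rwa [hp.eq, hq.eq, sub_self, sub_self, mul_zero, add_zero, sub_eq_zero] at e

section HalfInverse

variable {R : Type*} [Ring R] [Algebra ℝ R] {u a : R}

theorem exists_units_inv_eq_of_mul_eq_two (h₁ : u * a = 2) (h₂ : a * u = 2) :
    ∃ w : Rˣ, (w : R) = a ∧ (↑w⁻¹ : R) = (2⁻¹ : ℝ) • u := by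
  have half_two : (2⁻¹ : ℝ) • (2 : R) = 1 := by
    rw [Algebra.smul_def, ← map_ofNat (algebraMap ℝ R) 2, ← map_mul]
    norm_num
  exact ⟨⟨a, (2⁻¹ : ℝ) • u, by rw [mul_smul_comm, h₂, half_two],
    by rw [smul_mul_assoc, h₁, half_two]⟩, rfl, rfl⟩

theorem isUnit_of_mul_eq_two (h₁ : u * a = 2) (h₂ : a * u = 2) : IsUnit a :=
  let ⟨w, hw, _⟩ := exists_units_inv_eq_of_mul_eq_two h₁ h₂
  ⟨w, hw⟩

theorem Commute.of_mul_eq_two {d : R} (hdu : Commute d u) (h₁ : u * a = 2) (h₂ : a * u = 2) :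
    Commute d a := by
  obtain ⟨w, rfl, hw⟩ := exists_units_inv_eq_of_mul_eq_two h₁ h₂
  simpa using (hw ▸ hdu.smul_right (2⁻¹ : ℝ) : Commute d ↑w⁻¹).units_inv_right

end HalfInverse

section SqrtNearOne

variable {A : Type*} [NormedRing A] [NormedAlgebra ℝ A]

theorem norm_half_smul_add_mul_self_sub_le (y X X' : A) :
    ‖(2⁻¹ : ℝ) • (y + X * X) - (2⁻¹ : ℝ) • (y + X' * X')‖ ≤ (‖X‖ + ‖X'‖) / 2 * ‖X - X'‖ := by
  have h : y + X * X - (y + X' * X') = X * (X - X') + (X - X') * X' := by noncomm_ring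
  rw [← smul_sub, h, norm_smul, Real.norm_of_nonneg (by norm_num)]
  calc 2⁻¹ * ‖X * (X - X') + (X - X') * X'‖
      ≤ 2⁻¹ * (‖X‖ * ‖X - X'‖ + ‖X - X'‖ * ‖X'‖) := by
        gcongr
        exact (norm_add_le _ _).trans (add_le_add (norm_mul_le _ _) (norm_mul_le _ _))
    _ = (‖X‖ + ‖X'‖) / 2 * ‖X - X'‖ := by ring

variable [CompleteSpace A] [StarRing A] [ContinuousStar A] [StarModule ℝ A]

theorem exists_fixedPoint_half_smul_one_sub_add_mul_self {a : A} (ha : IsSelfAdjoint a)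
    (h : ‖1 - a‖ < 1) :
    ∃ F : A, IsSelfAdjoint F ∧ ‖F‖ < 1 ∧ F ∈ Set.centralizer (Set.centralizer {a}) ∧
      (2⁻¹ : ℝ) • (1 - a + F * F) = F := by
  -- `s` is chosen so that `‖1 - a‖ + s ^ 2 ≤ 2 s`: the map sends the `s`-ball into itself
  set s := (1 + ‖1 - a‖) / 2 with hs
  have hs0 : 0 ≤ s := by positivity
  have hs1 : s < 1 := by linarith
  set C := Subalgebra.centralizer ℝ (Set.centralizer {a})
  have haC : a ∈ C := Set.subset_centralizer_centralizer rfl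
  set D : Set A := Metric.closedBall 0 s ∩ {X | IsSelfAdjoint X} ∩ C
  have hD : IsClosed D :=
    (Metric.isClosed_closedBall.inter (isClosed_eq continuous_star continuous_id)).inter
      (Set.isClosed_centralizer _)
  set f : A → A := fun X => (2⁻¹ : ℝ) • (1 - a + X * X)
  have hfD : Set.MapsTo f D D := by
    rintro X ⟨⟨hXs, hXsa⟩, hXC⟩
    rw [mem_closedBall_zero_iff] at hXs
    refine ⟨⟨?_, ?_⟩, ?_⟩
    · rw [mem_closedBall_zero_iff]
      calc ‖f X‖ ≤ 2⁻¹ * (‖1 - a‖ + ‖X‖ * ‖X‖) := by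
            simp only [f, norm_smul, Real.norm_of_nonneg (by norm_num : (0:ℝ) ≤ 2⁻¹)]
            gcongr
            exact (norm_add_le _ _).trans (add_le_add_right (norm_mul_le _ _) _)
        _ ≤ s := by nlinarith [norm_nonneg X]
    · have hXX : IsSelfAdjoint (X * X) := by
        simpa only [hXsa.star_eq] using IsSelfAdjoint.star_mul_self X
      exact (IsSelfAdjoint.all _).smul (((IsSelfAdjoint.one A).sub ha).add hXX)
    · exact C.smul_mem (C.add_mem (C.sub_mem C.one_mem haC) (C.mul_mem hXC hXC)) _
  have hf (X X' : D) : dist (f X) (f X') ≤ s * dist (X : A) X' := by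
    have hX := mem_closedBall_zero_iff.mp X.2.1.1
    have hX' := mem_closedBall_zero_iff.mp X'.2.1.1
    rw [dist_eq_norm, dist_eq_norm]
    refine (norm_half_smul_add_mul_self_sub_le _ (X : A) X').trans ?_
    gcongr
    linarith
  have hcontr : ContractingWith ⟨s, hs0⟩ (hfD.restrict f D D) :=
    ⟨hs1, LipschitzWith.of_dist_le_mul fun X X' => by
      rw [Subtype.dist_eq, Subtype.dist_eq]
      exact hf X X'⟩
  obtain ⟨F, ⟨⟨hFs, hFsa⟩, hFC⟩, hFfix, -⟩ := hcontr.exists_fixedPoint' hD.isComplete hfD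
    (x := 0) ⟨⟨by simpa using hs0, .zero A⟩, C.zero_mem⟩ (edist_ne_top _ _)
  exact ⟨F, hFsa, (mem_closedBall_zero_iff.mp hFs).trans_lt hs1, hFC, hFfix⟩

theorem exists_mul_self_eq_of_norm_one_sub_lt_one {a : A} (ha : IsSelfAdjoint a)
    (h : ‖1 - a‖ < 1) :
    ∃ b : A, IsSelfAdjoint b ∧ ‖1 - b‖ < 1 ∧ b * b = a ∧
      b ∈ Set.centralizer (Set.centralizer {a}) := by
  obtain ⟨F, hFsa, hF1, hFC, hFfix⟩ := exists_fixedPoint_half_smul_one_sub_add_mul_self ha h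
  have hF : F * F = (2 : ℝ) • F - (1 - a) := by
    conv_rhs => rw [← hFfix, smul_smul]
    norm_num
  refine ⟨1 - F, (IsSelfAdjoint.one A).sub hFsa, by rwa [sub_sub_cancel], ?_,
    (Subalgebra.centralizer ℝ _).sub_mem (Subalgebra.one_mem _) hFC⟩
  calc (1 - F) * (1 - F) = 1 - (2 : ℝ) • F + F * F := by rw [two_smul]; noncomm_ring
    _ = a := by rw [hF]; abel

end SqrtNearOne

namespace ContinuousLinearMap

variable {V : Type*} [NormedAddCommGroup V] [InnerProductSpace ℝ V]

theorem inner_apply_self_le_norm_mul_sq (T : V →L[ℝ] V) (x : V) : ⟪T x, x⟫ ≤ ‖T‖ * ‖x‖ ^ 2 :=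
  calc ⟪T x, x⟫ ≤ ‖T x‖ * ‖x‖ := real_inner_le_norm _ _
    _ ≤ ‖T‖ * ‖x‖ * ‖x‖ := by gcongr; exact T.le_opNorm x
    _ = ‖T‖ * ‖x‖ ^ 2 := by ring

theorem one_sub_norm_one_sub_mul_sq_le_inner (T : V →L[ℝ] V) (x : V) :
    (1 - ‖1 - T‖) * ‖x‖ ^ 2 ≤ ⟪T x, x⟫ := by
  have := (1 - T).inner_apply_self_le_norm_mul_sq x
  rw [sub_apply, one_apply_eq_self, inner_sub_left, real_inner_self_eq_norm_sq] at this
  linarith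

theorem eq_of_mul_self_eq_of_commute {C D : V →L[ℝ] V} {c : ℝ} (hc : 0 < c)
    (hC : ∀ x, c * ‖x‖ ^ 2 ≤ ⟪C x, x⟫) (hD : D.IsPositive) (hCD : Commute C D)
    (h : C * C = D * D) : C = D := by
  have hsum : (C + D) * (C - D) = 0 := by
    rw [add_mul, mul_sub, mul_sub, h, hCD.eq]
    abel
  ext x
  suffices hy0 : (C - D) x = 0 by rwa [sub_apply, sub_eq_zero] at hy0
  set y := (C - D) x
  have hy : C y + D y = 0 := by
    change ((C + D) * (C - D)) x = 0
    rw [hsum, zero_apply]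
  have : c * ‖y‖ ^ 2 ≤ 0 := calc
    c * ‖y‖ ^ 2 ≤ ⟪C y, y⟫ + ⟪D y, y⟫ := by linarith [hC y, hD.inner_nonneg_left y]
    _ = 0 := by rw [← inner_add_left, hy, inner_zero_left]
  by_contra hy0
  nlinarith [pow_pos (norm_pos_iff.mpr hy0) 2]

variable [CompleteSpace V]

theorem norm_le_of_abs_inner_le {T : V →L[ℝ] V} (hT : IsSelfAdjoint T) {q : ℝ} (hq : 0 ≤ q)
    (h : ∀ x, |⟪T x, x⟫| ≤ q * ‖x‖ ^ 2) : ‖T‖ ≤ q := by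
  rw [norm_eq_iSup_rayleighQuotient (T := T) hT.isSymmetric]
  refine ciSup_le fun x => ?_
  rcases eq_or_ne x 0 with rfl | hx
  · simpa using hq
  rw [rayleighQuotient, reApplyInnerSelf_apply, RCLike.re_to_real, abs_div, abs_sq,
    div_le_iff₀ (by positivity)]
  exact h x

theorem norm_one_sub_inv_smul_lt_one {M : V →L[ℝ] V} (hM : IsSelfAdjoint M) {c : ℝ} (hc : 0 < c)
    (hcM : ∀ x, c * ‖x‖ ^ 2 ≤ ⟪M x, x⟫) : ‖1 - (‖M‖ + c)⁻¹ • M‖ < 1 := by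
  set ν := ‖M‖ + c
  have hν : 0 < ν := by positivity
  refine (norm_le_of_abs_inner_le ((IsSelfAdjoint.one _).sub ((IsSelfAdjoint.all _).smul hM))
    (q := 1 - c / ν) (sub_nonneg.mpr ?_) fun x => ?_).trans_lt ?_
  · rw [div_le_one hν]
    linarith [norm_nonneg M]
  · have hlow := mul_le_mul_of_nonneg_left (hcM x) (inv_nonneg.mpr hν.le)
    have hup := mul_le_mul_of_nonneg_left (M.inner_apply_self_le_norm_mul_sq x)
      (inv_nonneg.mpr hν.le)
    have hνν : ν⁻¹ * ‖M‖ + ν⁻¹ * c = 1 := by rw [← mul_add, inv_mul_cancel₀ hν.ne']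
    rw [sub_apply, one_apply_eq_self, inner_sub_left, real_inner_self_eq_norm_sq, smul_apply,
      real_inner_smul_left, abs_le, div_eq_inv_mul]
    constructor <;> nlinarith [sq_nonneg ‖x‖]
  · have : 0 < c / ν := by positivity
    linarith

theorem exists_sqrt_of_coercive {M : V →L[ℝ] V} (hM : IsSelfAdjoint M) {c : ℝ} (hc : 0 < c)
    (hcM : ∀ x, c * ‖x‖ ^ 2 ≤ ⟪M x, x⟫) :
    ∃ R : V →L[ℝ] V, R * R = M ∧ (∃ c' > 0, ∀ x, c' * ‖x‖ ^ 2 ≤ ⟪R x, x⟫) ∧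
      ∀ W, Commute M W → Commute R W := by
  set ν := ‖M‖ + c
  have hν : 0 < ν := by positivity
  obtain ⟨b, -, hb1, hbb, hbC⟩ := exists_mul_self_eq_of_norm_one_sub_lt_one
    ((IsSelfAdjoint.all _).smul hM) (norm_one_sub_inv_smul_lt_one hM hc hcM)
  refine ⟨√ν • b, ?_, ⟨√ν * (1 - ‖1 - b‖), mul_pos (Real.sqrt_pos.mpr hν) (sub_pos.mpr hb1),
    fun x => ?_⟩, fun W hW => ?_⟩
  · rw [smul_mul_smul_comm, hbb, smul_smul, Real.mul_self_sqrt hν.le, mul_inv_cancel₀ hν.ne',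
      one_smul]
  · rw [smul_apply, real_inner_smul_left, mul_assoc]
    exact mul_le_mul_of_nonneg_left (b.one_sub_norm_one_sub_mul_sq_le_inner x) (Real.sqrt_nonneg ν)
  · refine (Commute.symm (hbC W ?_)).smul_left _
    rintro _ rfl
    exact (hW.smul_left ν⁻¹).eq

theorem IsPositive.eq_of_mul_self_eq {M C D : V →L[ℝ] V} {c : ℝ} (hc : 0 < c)
    (hcM : ∀ x, c * ‖x‖ ^ 2 ≤ ⟪M x, x⟫) (hC : C.IsPositive) (hD : D.IsPositive)
    (hCM : C * C = M) (hDM : D * D = M) : C = D := by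
  have hM : IsSelfAdjoint M := by
    simpa only [← hCM, hC.isSelfAdjoint.star_eq] using IsSelfAdjoint.star_mul_self C
  obtain ⟨R, hRR, ⟨c', hc', hR⟩, hRcomm⟩ := exists_sqrt_of_coercive hM hc hcM
  have hR_eq {X : V →L[ℝ] V} (hX : X.IsPositive) (hXM : X * X = M) : R = X :=
    eq_of_mul_self_eq_of_commute hc' hR hX
      (hRcomm X (hXM ▸ (Commute.refl X).mul_left (Commute.refl X))) (hRR.trans hXM.symm)
  exact (hR_eq hC hCM).symm.trans (hR_eq hD hDM)

theorem exists_pos_mul_sq_le_inner_mul_self {B : V →L[ℝ] V} (hB : IsSelfAdjoint B)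
    (hBu : IsUnit B) : ∃ c > 0, ∀ x, c * ‖x‖ ^ 2 ≤ ⟪(B * B) x, x⟫ := by
  obtain ⟨N, hNB⟩ := hBu.exists_left_inv
  refine ⟨(‖N‖ ^ 2 + 1)⁻¹, by positivity, fun x => ?_⟩
  have hx : ‖x‖ ≤ ‖N‖ * ‖B x‖ := by
    have hx : N (B x) = x := by rw [← mul_apply_eq_comp, hNB, one_apply_eq_self]
    simpa [hx] using N.le_opNorm (B x)
  have hBx : ⟪(B * B) x, x⟫ = ‖B x‖ ^ 2 := by
    rw [← real_inner_self_eq_norm_sq]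
    exact hB.isSymmetric _ _
  rw [hBx, inv_mul_le_iff₀ (by positivity)]
  nlinarith [norm_nonneg x, norm_nonneg (B x), norm_nonneg N]

theorem isPositive_mul_of_one_add_mul_self_mul_eq_two {A D : V →L[ℝ] V} (hA : IsSelfAdjoint A)
    (hD : D.IsPositive) (hDA : Commute D A) (h : (1 + D * D) * A = 2) : (D * A).IsPositive := by
  have hD' : ((2⁻¹ : ℝ) • (D + D * D * D)).IsPositive := by
    refine (hD.add ?_).smul_of_nonneg (by norm_num)
    have := hD.conj_adjoint D
    rwa [hD.isSelfAdjoint.adjoint_eq] at this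
  have hDA' : A * ((2⁻¹ : ℝ) • (D + D * D * D)) * A = D * A := calc
    _ = (2⁻¹ : ℝ) • (A * D * ((1 + D * D) * A)) := by
      rw [mul_smul_comm, smul_mul_assoc]
      noncomm_ring
    _ = D * A := by
      rw [h, mul_two, ← two_smul ℝ, smul_smul, hDA.eq]
      norm_num
  rw [← hDA']
  have := hD'.conj_adjoint A
  rwa [hA.adjoint_eq] at this

end ContinuousLinearMap

section ReflectionAlongComplement

variable {V : Type*} [NormedAddCommGroup V] [NormedSpace ℝ V] {K L : Submodule ℝ V}
  {P Q S : V →L[ℝ] V}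

theorem ContinuousLinearMap.isIdempotentElem_of_isProj (hP : LinearMap.IsProj K P) :
    IsIdempotentElem P :=
  ContinuousLinearMap.ext fun x => hP.map_id _ (hP.map_mem x)

theorem mul_add_eq_sub_of_isProj (hP : LinearMap.IsProj K P) (hQ : LinearMap.IsProj L Q)
    (hSK : ∀ y ∈ K, S y = y) (hSL : ∀ z ∈ L, S z = -z) : S * (P + Q) = P - Q :=
  ContinuousLinearMap.ext fun x => by
    simp [hSK _ (hP.map_mem x), hSL _ (hQ.map_mem x), sub_eq_add_neg]

theorem mul_self_eq_one_of_sup_eq_top (hsup : K ⊔ L = ⊤) (hSK : ∀ y ∈ K, S y = y)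
    (hSL : ∀ z ∈ L, S z = -z) : S * S = 1 := by
  ext x
  obtain ⟨y, hy, z, hz, rfl⟩ := Submodule.mem_sup.mp (hsup ▸ Submodule.mem_top : x ∈ K ⊔ L)
  simp [hSK y hy, hSL z hz]

theorem two_sub_add_mul_eq_sub_of_isProj (hsup : K ⊔ L = ⊤) (hP : LinearMap.IsProj K P)
    (hQ : LinearMap.IsProj L Q) (hSK : ∀ y ∈ K, S y = y) (hSL : ∀ z ∈ L, S z = -z) :
    (2 - (P + Q)) * S = P - Q := by
  ext x
  obtain ⟨y, hy, z, hz, rfl⟩ := Submodule.mem_sup.mp (hsup ▸ Submodule.mem_top : x ∈ K ⊔ L)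
  simp [hSK y hy, hSL z hz, hP.map_id y hy, hQ.map_id z hz]
  module

end ReflectionAlongComplement

open ContinuousLinearMap in
theorem stmt_18_general {V : Type*} [NormedAddCommGroup V] [InnerProductSpace ℝ V] [CompleteSpace V]
    (K L : Submodule ℝ V)
    (hsup : K ⊔ L = ⊤)
    (P Q : V →L[ℝ] V) (hPsa : IsSelfAdjoint P) (hQsa : IsSelfAdjoint Q)
    (hPK : ∀ x, P x ∈ K) (hPfix : ∀ x ∈ K, P x = x)
    (hQL : ∀ x, Q x ∈ L) (hQfix : ∀ x ∈ L, Q x = x)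
    (J T : V →L[ℝ] V) (hJsa : IsSelfAdjoint J) (hJ2 : J * J = 1)
    (hT : T.IsPositive) (hT2 : T * T = (P - Q) * (P - Q)) (hJT : P - Q = J * T)
    (S Δ Δhalf : V →L[ℝ] V) (hSK : ∀ y ∈ K, S y = y) (hSL : ∀ z ∈ L, S z = -z)
    -- `Δ = (2 - (P+Q)) / (P+Q)` and `Δhalf` is its positive square root:
    (hΔ : Δ * (P + Q) = (2 : V →L[ℝ] V) - (P + Q))
    (hΔhalf : Δhalf.IsPositive) (hΔhalf2 : Δhalf * Δhalf = Δ) :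
    ((2 : V →L[ℝ] V) - (P + Q)) * S = P - Q ∧
    adjoint S * J = J * S ∧
    S = J * Δhalf := by
  have hP : LinearMap.IsProj K P := ⟨hPK, hPfix⟩
  have hQ : LinearMap.IsProj L Q := ⟨hQL, hQfix⟩
  set A := P + Q
  have hAsa : IsSelfAdjoint A := hPsa.add hQsa
  subst hΔhalf2
  have hA₁ : (1 + Δhalf * Δhalf) * A = 2 := by rw [add_mul, one_mul, hΔ, add_sub_cancel]
  have hA₂ : A * (1 + Δhalf * Δhalf) = 2 := by
    simpa [hAsa.star_eq, hΔhalf.isSelfAdjoint.star_eq] using congr(star $hA₁)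
  have hAunit : IsUnit A := isUnit_of_mul_eq_two hA₁ hA₂
  have hcomm : Commute Δhalf A := Commute.of_mul_eq_two
    ((Commute.one_right _).add_right ((Commute.refl _).mul_right (Commute.refl _))) hA₁ hA₂
  have hSA : S * A = P - Q := mul_add_eq_sub_of_isProj hP hQ hSK hSL
  have hBunit : IsUnit (P - Q) :=
    have hSS := mul_self_eq_one_of_sup_eq_top hsup hSK hSL
    hSA ▸ IsUnit.mul ⟨⟨S, S, hSS, hSS⟩, rfl⟩ hAunit
  obtain ⟨c, hc, hcB⟩ := exists_pos_mul_sq_le_inner_mul_self (hPsa.sub hQsa) hBunit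
  have hTΔ : T = Δhalf * A := by
    refine IsPositive.eq_of_mul_self_eq hc hcB hT
      (isPositive_mul_of_one_add_mul_self_mul_eq_two hAsa hΔhalf hcomm hA₁) hT2 ?_
    rw [hcomm.symm.mul_mul_mul_comm, ← mul_assoc, hΔ]
    exact ((isIdempotentElem_of_isProj hP).sub_mul_self_sub (isIdempotentElem_of_isProj hQ)).symm
  have hS : S = J * Δhalf := hAunit.mul_left_injective <| show S * A = J * Δhalf * A by
    rw [hSA, hJT, hTΔ, mul_assoc]
  refine ⟨two_sub_add_mul_eq_sub_of_isProj hsup hP hQ hSK hSL, ?_, hS⟩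
  rw [← star_eq_adjoint, hS, star_mul, hΔhalf.isSelfAdjoint.star_eq, hJsa.star_eq, mul_assoc, hJ2,
    mul_one, ← mul_assoc, hJ2, one_mul]

open ContinuousLinearMap in
theorem stmt_18 {V : Type*} [NormedAddCommGroup V] [InnerProductSpace ℝ V] [CompleteSpace V]
    (K L : Submodule ℝ V) (hKc : IsClosed (K : Set V)) (hLc : IsClosed (L : Set V))
    (hsup : K ⊔ L = ⊤) (hinf : K ⊓ L = ⊥)
    (P Q : V →L[ℝ] V) (hPsa : IsSelfAdjoint P) (hQsa : IsSelfAdjoint Q)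
    (hPK : ∀ x, P x ∈ K) (hPfix : ∀ x ∈ K, P x = x)
    (hQL : ∀ x, Q x ∈ L) (hQfix : ∀ x ∈ L, Q x = x)
    (J T : V →L[ℝ] V) (hJsa : IsSelfAdjoint J) (hJ2 : J * J = 1)
    (hT : T.IsPositive) (hT2 : T * T = (P - Q) * (P - Q)) (hJT : P - Q = J * T)
    (S Δ Δhalf : V →L[ℝ] V) (hSK : ∀ y ∈ K, S y = y) (hSL : ∀ z ∈ L, S z = -z)
    -- `Δ = (2 - (P+Q)) / (P+Q)` and `Δhalf` is its positive square root:
    (hΔ : Δ * (P + Q) = (2 : V →L[ℝ] V) - (P + Q))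
    (hΔhalf : Δhalf.IsPositive) (hΔhalf2 : Δhalf * Δhalf = Δ) :
    ((2 : V →L[ℝ] V) - (P + Q)) * S = P - Q ∧
    adjoint S * J = J * S ∧
    S = J * Δhalf :=
  stmt_18_general K L hsup P Q hPsa hQsa hPK hPfix hQL hQfix J T hJsa hJ2 hT hT2 hJT S Δ Δhalf hSK
    hSL hΔ hΔhalf hΔhalf2
end
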